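/- If G and H both admit interval colorings and H is an r-regular graph, then the strong product G ⊠ H admits an interval coloring; moreover w(G ⊠ H) ≤ w(G)·(r+1) + r and W(G ⊠ H) ≥ W(G)·(r+1) + r. -/

import Mathlib

open SimpleGraph

/-- `c` is an interval `t`-coloring of `G`: edges get colors in `{1,…,t}`, every color
`1,…,t` is used, adjacent edges get distinct colors, and the set of colors of edges
incident to any vertex is an interval of integers. -/
def IsIntervalColoring {V : Type*} (G : SimpleGraph V) (t : ℕ) (c : Sym2 V → ℕ) : Prop :=
  (∀ e ∈ G.edgeSet, 1 ≤ c e ∧ c e ≤ t) ∧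
  (∀ i, 1 ≤ i → i ≤ t → ∃ e ∈ G.edgeSet, c e = i) ∧
  (∀ v w₁ w₂, G.Adj v w₁ → G.Adj v w₂ → w₁ ≠ w₂ → c s(v, w₁) ≠ c s(v, w₂)) ∧
  (∀ v i j k, (∃ w, G.Adj v w ∧ c s(v, w) = i) → (∃ w, G.Adj v w ∧ c s(v, w) = k) →
    i ≤ j → j ≤ k → ∃ w, G.Adj v w ∧ c s(v, w) = j)

/-- `G` has an interval `t`-coloring. -/
def HasIntervalColoring {V : Type*} (G : SimpleGraph V) (t : ℕ) : Prop :=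
  ∃ c : Sym2 V → ℕ, IsIntervalColoring G t c

/-- `G` is interval colorable (`G ∈ 𝔑`). -/
def IntervalColorable {V : Type*} (G : SimpleGraph V) : Prop :=
  ∃ t : ℕ, 1 ≤ t ∧ HasIntervalColoring G t

/-- `w G`: the least number of colors in an interval coloring of `G`. -/
noncomputable def wNum {V : Type*} (G : SimpleGraph V) : ℕ :=
  sInf {t | HasIntervalColoring G t}

/-- `W G`: the greatest number of colors in an interval coloring of `G`. -/
noncomputable def WNum {V : Type*} (G : SimpleGraph V) : ℕ :=
  sSup {t | HasIntervalColoring G t}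

/-- `G` is `r`-regular: every vertex has exactly `r` neighbors. -/
def IsRegularGraph {V : Type*} (G : SimpleGraph V) (r : ℕ) : Prop :=
  ∀ v : V, (G.neighborSet v).ncard = r

/-- `c` is a proper edge coloring of `G` using colors `0,…,k-1`. -/
def IsProperEdgeColoring {V : Type*} (G : SimpleGraph V) (k : ℕ) (c : Sym2 V → ℕ) : Prop :=
  (∀ e ∈ G.edgeSet, c e < k) ∧
  (∀ v w₁ w₂, G.Adj v w₁ → G.Adj v w₂ → w₁ ≠ w₂ → c s(v, w₁) ≠ c s(v, w₂))

/-- The chromatic index `χ'(G)`. -/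
noncomputable def edgeChromaticNumber {V : Type*} (G : SimpleGraph V) : ℕ :=
  sInf {k | ∃ c : Sym2 V → ℕ, IsProperEdgeColoring G k c}

/-- `G` is 1-factorable: its edge set decomposes into perfect matchings. -/
def IsOneFactorable {V : Type*} (G : SimpleGraph V) : Prop :=
  ∃ (n : ℕ) (f : Fin n → SimpleGraph.Subgraph G),
    (∀ i, (f i).IsPerfectMatching) ∧
    (∀ e ∈ G.edgeSet, ∃! i, e ∈ (f i).edgeSet)

/-- The tensor (direct) product `G × H`. -/
def tensorProd {α β : Type*} (G : SimpleGraph α) (H : SimpleGraph β) :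
    SimpleGraph (α × β) where
  Adj p q := G.Adj p.1 q.1 ∧ H.Adj p.2 q.2
  symm := ⟨fun p q ⟨h₁, h₂⟩ => ⟨h₁.symm, h₂.symm⟩⟩
  loopless := ⟨fun p h => G.irrefl h.1⟩

/-- The strong tensor (semistrong) product `G ⊗ H`. -/
def strongTensorProd {α β : Type*} (G : SimpleGraph α) (H : SimpleGraph β) :
    SimpleGraph (α × β) where
  Adj p q := (G.Adj p.1 q.1 ∧ H.Adj p.2 q.2) ∨ (p.2 = q.2 ∧ G.Adj p.1 q.1)
  symm := ⟨fun p q h => by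
    rcases h with ⟨h₁, h₂⟩ | ⟨h₁, h₂⟩
    · exact Or.inl ⟨h₁.symm, h₂.symm⟩
    · exact Or.inr ⟨h₁.symm, h₂.symm⟩⟩
  loopless := ⟨fun p h => by
    rcases h with ⟨h₁, _⟩ | ⟨_, h₁⟩ <;> exact G.irrefl h₁⟩

/-- The strong product `G ⊠ H`. -/
def strongProd {α β : Type*} (G : SimpleGraph α) (H : SimpleGraph β) :
    SimpleGraph (α × β) where
  Adj p q := (G.Adj p.1 q.1 ∧ H.Adj p.2 q.2) ∨ (p.1 = q.1 ∧ H.Adj p.2 q.2) ∨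
    (p.2 = q.2 ∧ G.Adj p.1 q.1)
  symm := ⟨fun p q h => by
    rcases h with ⟨h₁, h₂⟩ | ⟨h₁, h₂⟩ | ⟨h₁, h₂⟩
    · exact Or.inl ⟨h₁.symm, h₂.symm⟩
    · exact Or.inr (Or.inl ⟨h₁.symm, h₂.symm⟩)
    · exact Or.inr (Or.inr ⟨h₁.symm, h₂.symm⟩)⟩
  loopless := ⟨fun p h => by
    rcases h with ⟨h₁, _⟩ | ⟨_, h₂⟩ | ⟨_, h₁⟩
    · exact G.irrefl h₁
    · exact H.irrefl h₂
    · exact G.irrefl h₁⟩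

/-- The lexicographic product (composition) `G[H]`. -/
def lexProd {α β : Type*} (G : SimpleGraph α) (H : SimpleGraph β) :
    SimpleGraph (α × β) where
  Adj p q := G.Adj p.1 q.1 ∨ (p.1 = q.1 ∧ H.Adj p.2 q.2)
  symm := ⟨fun p q h => by
    rcases h with h₁ | ⟨h₁, h₂⟩
    · exact Or.inl h₁.symm
    · exact Or.inr ⟨h₁.symm, h₂.symm⟩⟩
  loopless := ⟨fun p h => by
    rcases h with h₁ | ⟨_, h₂⟩
    · exact G.irrefl h₁
    · exact H.irrefl h₂⟩


/-!
The edges at a vertex `(u, x)` of `G ⊠ H` get colors in blocks of `r + 1` consecutive integers,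
color `(r + 1) * block + 1 + slot` with `slot ≤ r`. Since `H` is `r`-regular and interval colorable,
reducing its colors `α` to `(α - 1) mod r` gives a proper `r`-edge-coloring `β` of `H` in which
every vertex sees every color, because the `r` colors at a vertex are consecutive. Over a `G`-edge `uv` of color `k` the edges use block `k - 1`:
`(u, x)(v, y)` takes slot `β(xy)` and `(u, x)(v, x)` the last slot `r`. The fibre edges
`(u, x)(u, y)` take slot `β(xy)` of block `m`, where `m` is the largest color at `u`. If the colors
at `u` form the interval `(a, m]`, the colors at `(u, x)` form `[(r + 1)a + 1, (r + 1)m + r]`, so a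
`t`-coloring of `G` yields a `((r + 1)t + r)`-coloring of `G ⊠ H`.
-/

open Set

theorem bijOn_sub_one_mod (a r : ℕ) : BijOn (fun n => (n - 1) % r) (Ioc a (a + r)) (Iio r) := by
  refine ⟨fun n hn => Nat.mod_lt _ (by grind), fun n₁ hn₁ n₂ hn₂ h => ?_, fun j hj => ?_⟩
  · have := Nat.ModEq.eq_of_abs_lt h (abs_sub_lt_iff.2 (by grind))
    grind
  · have : j ∈ (Finset.Ico a (a + r)).image (· % r) := by
      rw [Nat.image_Ico_mod]
      exact Finset.mem_range.2 hj
    obtain ⟨m, hm, rfl⟩ := Finset.mem_image.1 this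
    exact ⟨m + 1, by grind, by simp⟩

theorem eq_and_eq_of_mul_add_eq_mul_add {k q₁ q₂ s₁ s₂ : ℕ} (h₁ : s₁ < k) (h₂ : s₂ < k)
    (h : k * q₁ + s₁ = k * q₂ + s₂) : q₁ = q₂ ∧ s₁ = s₂ := by
  have hk : 0 < k := by omega
  constructor
  · simpa [Nat.mul_add_div hk, Nat.div_eq_of_lt h₁, Nat.div_eq_of_lt h₂] using
      congrArg (· / k) h
  · simpa [Nat.mul_add_mod, Nat.mod_eq_of_lt h₁, Nat.mod_eq_of_lt h₂] using congrArg (· % k) h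

theorem setOf_mul_add_eq_Icc {a m r : ℕ} (ham : a ≤ m) :
    {i | ∃ q s, i = (r + 1) * q + 1 + s ∧ (q + 1 ∈ Ioc a m ∧ s ≤ r ∨ q = m ∧ s < r)} =
      Icc ((r + 1) * a + 1) ((r + 1) * m + r) := by
  ext i
  simp only [mem_ofPred_eq, mem_Ioc, mem_Icc]
  constructor
  · rintro ⟨q, s, rfl, ⟨⟨haq, hqm⟩, hs⟩ | ⟨rfl, hs⟩⟩
    · have h₁ : (r + 1) * a ≤ (r + 1) * q := Nat.mul_le_mul_left _ (by omega)
      have h₂ : (r + 1) * (q + 1) ≤ (r + 1) * m := Nat.mul_le_mul_left _ hqm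
      rw [mul_add_one] at h₂
      omega
    · have := Nat.mul_le_mul_left (r + 1) ham
      omega
  · rintro ⟨hi₁, hi₂⟩
    obtain ⟨q, s, hs, hdm⟩ : ∃ q s, s < r + 1 ∧ (r + 1) * q + s = i - 1 :=
      ⟨_, _, Nat.mod_lt _ (Nat.succ_pos r), Nat.div_add_mod (i - 1) (r + 1)⟩
    have haq : a ≤ q := by
      by_contra! hqa
      have : (r + 1) * (q + 1) ≤ (r + 1) * a := Nat.mul_le_mul_left _ hqa
      rw [mul_add_one] at this
      omega
    have hqm : q ≤ m := by
      by_contra! hmq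
      have : (r + 1) * (m + 1) ≤ (r + 1) * q := Nat.mul_le_mul_left _ hmq
      rw [mul_add_one] at this
      omega
    refine ⟨q, s, by omega, ?_⟩
    rcases hqm.lt_or_eq with hqm | rfl
    · exact .inl ⟨⟨by omega, hqm⟩, by omega⟩
    · exact .inr ⟨rfl, by omega⟩

theorem exists_block_of_mem_Icc {r t i : ℕ} (ht : 1 ≤ t) (hi : i ∈ Icc 1 ((r + 1) * t + r)) :
    ∃ q < t, (r + 1) * q < i ∧ i ≤ (r + 1) * (q + 1) + r := by
  obtain ⟨hi₁, hi₂⟩ := hi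
  have h₁ : (r + 1) * ((i - 1) / (r + 1)) ≤ i - 1 := Nat.mul_div_le (i - 1) (r + 1)
  have h₂ : i - 1 < (r + 1) * ((i - 1) / (r + 1) + 1) := Nat.lt_mul_div_succ _ (Nat.succ_pos r)
  rcases lt_or_ge ((i - 1) / (r + 1)) t with hq | hq
  · exact ⟨_, hq, by omega, by omega⟩
  · obtain ⟨t, rfl⟩ := Nat.exists_eq_add_of_le' ht
    have := Nat.mul_le_mul_left (r + 1) hq
    rw [mul_add_one] at this
    exact ⟨t, by omega, by omega, by omega⟩

section IntervalColoring

variable {V : Type*} {G : SimpleGraph V} {t : ℕ} {c : Sym2 V → ℕ}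

def palette (G : SimpleGraph V) (c : Sym2 V → ℕ) (v : V) : Set ℕ :=
  (fun w => c s(v, w)) '' G.neighborSet v

theorem isIntervalColoring_iff :
    IsIntervalColoring G t c ↔
      (∀ e ∈ G.edgeSet, c e ∈ Icc 1 t) ∧ Icc 1 t ⊆ c '' G.edgeSet ∧
        (∀ v, InjOn (fun w => c s(v, w)) (G.neighborSet v)) ∧
          ∀ v, (palette G c v).OrdConnected := by
  refine and_congr Iff.rfl (and_congr ⟨fun h i hi => h i hi.1 hi.2, fun h i h₁ h₂ => h ⟨h₁, h₂⟩⟩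
    (and_congr ⟨fun h v w₁ h₁ w₂ h₂ heq => of_not_not fun hne => h v w₁ w₂ h₁ h₂ hne heq,
      fun h v w₁ w₂ h₁ h₂ hne heq => hne (h v h₁ h₂ heq)⟩
    ⟨fun h v => ⟨fun i hi k hk j hj => h v i j k hi hk hj.1 hj.2⟩,
      fun h v i j k hi hk hij hjk => (h v).out hi hk ⟨hij, hjk⟩⟩))

namespace IsIntervalColoring

theorem one_le (hc : IsIntervalColoring G t c) {u v : V} (h : G.Adj u v) : 1 ≤ t :=
  (hc.1 s(u, v) h).1.trans (hc.1 s(u, v) h).2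

theorem palette_subset_Icc (hc : IsIntervalColoring G t c) (v : V) :
    palette G c v ⊆ Icc 1 t := by
  rintro _ ⟨w, hw, rfl⟩
  exact hc.1 _ hw

theorem injOn_neighborSet (hc : IsIntervalColoring G t c) (v : V) :
    InjOn (fun w => c s(v, w)) (G.neighborSet v) :=
  (isIntervalColoring_iff.1 hc).2.2.1 v

theorem bddAbove_palette (hc : IsIntervalColoring G t c) (v : V) : BddAbove (palette G c v) :=
  ⟨t, fun _ hi => (hc.palette_subset_Icc v hi).2⟩

theorem le_sSup_palette (hc : IsIntervalColoring G t c) {v w : V} (h : G.Adj v w) :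
    c s(v, w) ≤ sSup (palette G c v) :=
  le_csSup (hc.bddAbove_palette v) ⟨w, h, rfl⟩

theorem sSup_palette_le (hc : IsIntervalColoring G t c) (v : V) :
    sSup (palette G c v) ≤ t :=
  csSup_le' fun _ hi => (hc.palette_subset_Icc v hi).2

theorem palette_eq_Ioc (hc : IsIntervalColoring G t c) (v : V) :
    ∃ a ≤ sSup (palette G c v), palette G c v = Ioc a (sSup (palette G c v)) := by
  set P := palette G c v
  rcases P.eq_empty_or_nonempty with hP | hP
  · exact ⟨0, by simp [hP], by simp [hP]⟩
  have hIcc := (hP.ordConnected_iff_of_bdd (OrderBot.bddBelow P) (hc.bddAbove_palette v)).1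
    ((isIntervalColoring_iff.1 hc).2.2.2 v)
  have hpos : 1 ≤ sInf P := (hc.palette_subset_Icc v (Nat.sInf_mem hP)).1
  refine ⟨sInf P - 1, (Nat.sub_le _ 1).trans
    (csInf_le_csSup hP (OrderBot.bddBelow P) (hc.bddAbove_palette v)), ?_⟩
  calc P = Icc (sInf P) (sSup P) := hIcc
    _ = Ioc (sInf P - 1) (sSup P) := by ext i; simp only [mem_Icc, mem_Ioc]; omega

theorem exists_bijOn_of_isRegularGraph {r : ℕ} (hc : IsIntervalColoring G t c)
    (hreg : IsRegularGraph G r) :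
    ∃ b : Sym2 V → ℕ, ∀ v, BijOn (fun w => b s(v, w)) (G.neighborSet v) (Iio r) := by
  refine ⟨fun e => (c e - 1) % r, fun v => ?_⟩
  obtain ⟨a, ha, hP⟩ := hc.palette_eq_Ioc v
  have hcard : (palette G c v).ncard = r := (hc.injOn_neighborSet v).ncard_image.trans (hreg v)
  rw [hP, ncard_Ioc_nat] at hcard
  have hf : BijOn (fun w => c s(v, w)) (G.neighborSet v) (Ioc a (a + r)) := by
    have h : BijOn _ _ (palette G c v) := (hc.injOn_neighborSet v).bijOn_image
    rwa [hP, show sSup (palette G c v) = a + r by omega] at h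
  exact (bijOn_sub_one_mod a r).comp hf

end IsIntervalColoring

theorem IntervalColorable.exists_adj (h : IntervalColorable G) : ∃ u v, G.Adj u v := by
  obtain ⟨t, ht, c, hc⟩ := h
  obtain ⟨e, he, -⟩ := hc.2.1 1 le_rfl ht
  induction e using Sym2.ind with
  | _ u v => exact ⟨u, v, he⟩

theorem bddAbove_setOf_hasIntervalColoring [Finite V] (G : SimpleGraph V) :
    BddAbove {t | HasIntervalColoring G t} :=
  ⟨G.edgeSet.ncard, fun t ⟨c, hc⟩ => calc
    t = (Icc 1 t).ncard := by simp
    _ ≤ (c '' G.edgeSet).ncard := ncard_le_ncard (isIntervalColoring_iff.1 hc).2.1 (toFinite _)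
    _ ≤ G.edgeSet.ncard := ncard_image_le (toFinite _)⟩

end IntervalColoring

section StrongProduct

variable {A B : Type*} {G : SimpleGraph A} {H : SimpleGraph B} {c : Sym2 A → ℕ} {b : Sym2 B → ℕ}
  {r t : ℕ}

theorem strongProd_adj_iff {p q : A × B} :
    (strongProd G H).Adj p q ↔
      p ≠ q ∧ q.1 ∈ insert p.1 (G.neighborSet p.1) ∧ q.2 ∈ insert p.2 (H.neighborSet p.2) := by
  simp only [mem_insert_iff, mem_neighborSet]
  constructor
  · rintro (⟨h₁, h₂⟩ | ⟨h₁, h₂⟩ | ⟨h₂, h₁⟩)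
    · exact ⟨fun h => h₁.ne (congrArg Prod.fst h), .inr h₁, .inr h₂⟩
    · exact ⟨fun h => h₂.ne (congrArg Prod.snd h), .inl h₁.symm, .inr h₂⟩
    · exact ⟨fun h => h₁.ne (congrArg Prod.fst h), .inr h₁, .inl h₂.symm⟩
  · rintro ⟨hne, h₁ | h₁, h₂ | h₂⟩
    · exact absurd (Prod.ext h₁ h₂).symm hne
    · exact .inr (.inl ⟨h₁.symm, h₂⟩)
    · exact .inr (.inr ⟨h₂.symm, h₁⟩)
    · exact .inl ⟨h₁, h₂⟩

open Classical in
/-- For isolated `u` the junk value `sSup ∅ = 0` is the right one: the fibre edges then take the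
first block. -/
noncomputable def blockIndex (G : SimpleGraph A) (c : Sym2 A → ℕ) (u v : A) : ℕ :=
  if u = v then sSup (palette G c u) else c s(u, v) - 1

open Classical in
noncomputable def slotIndex (b : Sym2 B → ℕ) (r : ℕ) (x y : B) : ℕ :=
  if x = y then r else b s(x, y)

theorem blockIndex_comm (u v : A) :
    blockIndex G c u v = blockIndex G c v u := by
  by_cases h : u = v
  · rw [h]
  · simp only [blockIndex, if_neg h, if_neg (Ne.symm h), Sym2.eq_swap]

theorem slotIndex_comm (x y : B) :
    slotIndex b r x y = slotIndex b r y x := by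
  by_cases h : x = y
  · rw [h]
  · simp only [slotIndex, if_neg h, if_neg (Ne.symm h), Sym2.eq_swap]

noncomputable def strongProdColoring (G : SimpleGraph A) (c : Sym2 A → ℕ) (b : Sym2 B → ℕ)
    (r : ℕ) : Sym2 (A × B) → ℕ :=
  Sym2.lift ⟨fun p q => (r + 1) * blockIndex G c p.1 q.1 + 1 + slotIndex b r p.2 q.2,
    fun p q => by dsimp only; rw [blockIndex_comm, slotIndex_comm]⟩

theorem strongProdColoring_mk (p q : A × B) :
    strongProdColoring G c b r s(p, q) =
      (r + 1) * blockIndex G c p.1 q.1 + 1 + slotIndex b r p.2 q.2 :=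
  rfl

theorem mem_palette_strongProdColoring (hpos : ∀ e ∈ G.edgeSet, 1 ≤ c e)
    (hb : ∀ x, BijOn (fun y => b s(x, y)) (H.neighborSet x) (Iio r)) (u : A) (x : B) (i : ℕ) :
    i ∈ palette (strongProd G H) (strongProdColoring G c b r) (u, x) ↔
      ∃ q s, i = (r + 1) * q + 1 + s ∧
        (q + 1 ∈ palette G c u ∧ s ≤ r ∨ q = sSup (palette G c u) ∧ s < r) := by
  constructor
  · rintro ⟨⟨v, y⟩, hadj, rfl⟩
    obtain ⟨hne, hv, hy⟩ := strongProd_adj_iff.1 hadj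
    dsimp only at hne hv hy
    refine ⟨_, _, strongProdColoring_mk _ _, ?_⟩
    rcases hv with rfl | hv
    · have hxy : H.Adj x y := hy.resolve_left fun h => hne (Prod.ext rfl h.symm)
      refine .inr ⟨if_pos rfl, ?_⟩
      rw [slotIndex, if_neg hxy.ne]
      exact (hb x).mapsTo hxy
    · refine .inl ⟨?_, ?_⟩
      · rw [blockIndex, if_neg hv.ne, Nat.sub_add_cancel (hpos _ hv)]
        exact ⟨v, hv, rfl⟩
      · rcases hy with rfl | hy
        · exact (if_pos rfl).le
        · rw [slotIndex, if_neg hy.ne]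
          exact ((hb x).mapsTo hy).le
  · rintro ⟨q, s, rfl, ⟨⟨v, hv, hq : c s(u, v) = q + 1⟩, hs⟩ | ⟨rfl, hs⟩⟩
    · have hblock : blockIndex G c u v = q := by
        rw [blockIndex, if_neg hv.ne]
        omega
      have hne (y : B) : (u, x) ≠ (v, y) := ne_of_apply_ne Prod.fst hv.ne
      rcases hs.lt_or_eq with hs | hs
      · obtain ⟨y, hy, rfl⟩ := (hb x).surjOn hs
        refine ⟨(v, y), strongProd_adj_iff.2 ⟨hne y, .inr hv, .inr hy⟩, ?_⟩
        dsimp only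
        rw [strongProdColoring_mk, hblock, slotIndex, if_neg hy.ne]
      · refine ⟨(v, x), strongProd_adj_iff.2 ⟨hne x, .inr hv, .inl rfl⟩, ?_⟩
        dsimp only
        rw [strongProdColoring_mk, hblock, slotIndex, if_pos rfl, hs]
    · obtain ⟨y, hy, rfl⟩ := (hb x).surjOn hs
      refine ⟨(u, y), strongProd_adj_iff.2 ⟨ne_of_apply_ne Prod.snd hy.ne, .inl rfl, .inr hy⟩, ?_⟩
      dsimp only
      rw [strongProdColoring_mk, blockIndex, if_pos rfl, slotIndex, if_neg hy.ne]

theorem IsIntervalColoring.palette_strongProdColoring (hc : IsIntervalColoring G t c)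
    (hb : ∀ x, BijOn (fun y => b s(x, y)) (H.neighborSet x) (Iio r)) (u : A) (x : B) :
    ∃ a ≤ sSup (palette G c u), palette G c u = Ioc a (sSup (palette G c u)) ∧
      palette (strongProd G H) (strongProdColoring G c b r) (u, x) =
        Icc ((r + 1) * a + 1) ((r + 1) * sSup (palette G c u) + r) := by
  obtain ⟨a, ha, hu⟩ := hc.palette_eq_Ioc u
  refine ⟨a, ha, hu, ?_⟩
  rw [← setOf_mul_add_eq_Icc ha, ← hu]
  ext i
  exact mem_palette_strongProdColoring (fun e he => (hc.1 e he).1) hb u x i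

theorem IsIntervalColoring.injOn_blockIndex (hc : IsIntervalColoring G t c) (u : A) :
    InjOn (blockIndex G c u) (insert u (G.neighborSet u)) := by
  have hnbr : ∀ v ∈ G.neighborSet u, blockIndex G c u v = c s(u, v) - 1 :=
    fun v hv => if_neg (G.ne_of_adj hv)
  rw [injOn_insert (G.notMem_neighborSet_self)]
  refine ⟨fun v₁ h₁ v₂ h₂ h => hc.injOn_neighborSet u h₁ h₂ ?_, ?_⟩
  · have := (hc.1 s(u, v₁) h₁).1
    have := (hc.1 s(u, v₂) h₂).1
    rw [hnbr v₁ h₁, hnbr v₂ h₂] at h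
    dsimp only
    omega
  · rintro ⟨v, hv, h⟩
    rw [hnbr v hv, blockIndex, if_pos rfl] at h
    have := (hc.1 s(u, v) hv).1
    have := hc.le_sSup_palette hv
    omega

theorem injOn_slotIndex {x : B} (hb : BijOn (fun y => b s(x, y)) (H.neighborSet x) (Iio r)) :
    InjOn (slotIndex b r x) (insert x (H.neighborSet x)) := by
  have hnbr : ∀ y ∈ H.neighborSet x, slotIndex b r x y = b s(x, y) :=
    fun y hy => if_neg (H.ne_of_adj hy)
  rw [injOn_insert (H.notMem_neighborSet_self)]
  refine ⟨fun y₁ h₁ y₂ h₂ h => hb.injOn h₁ h₂ (by rwa [hnbr _ h₁, hnbr _ h₂] at h), ?_⟩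
  rintro ⟨y, hy, h⟩
  rw [hnbr y hy, slotIndex, if_pos rfl] at h
  exact (hb.mapsTo hy).ne h

theorem slotIndex_le {x y : B} (hb : MapsTo (fun y => b s(x, y)) (H.neighborSet x) (Iio r))
    (hy : y ∈ insert x (H.neighborSet x)) : slotIndex b r x y ≤ r := by
  rcases hy with rfl | hy
  · exact (if_pos rfl).le
  · rw [slotIndex, if_neg (H.ne_of_adj hy)]
    exact (hb hy).le

theorem IsIntervalColoring.injOn_strongProdColoring (hc : IsIntervalColoring G t c)
    (hb : ∀ x, BijOn (fun y => b s(x, y)) (H.neighborSet x) (Iio r)) (p : A × B) :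
    InjOn (fun q => strongProdColoring G c b r s(p, q)) ((strongProd G H).neighborSet p) := by
  intro q₁ h₁ q₂ h₂ h
  obtain ⟨-, hu₁, hx₁⟩ := strongProd_adj_iff.1 h₁
  obtain ⟨-, hu₂, hx₂⟩ := strongProd_adj_iff.1 h₂
  have hs₁ := slotIndex_le (hb p.2).mapsTo hx₁
  have hs₂ := slotIndex_le (hb p.2).mapsTo hx₂
  simp only [strongProdColoring_mk] at h
  obtain ⟨hblock, hslot⟩ := eq_and_eq_of_mul_add_eq_mul_add (k := r + 1) (by omega) (by omega)
    (by omega : (r + 1) * blockIndex G c p.1 q₁.1 + slotIndex b r p.2 q₁.2 =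
      (r + 1) * blockIndex G c p.1 q₂.1 + slotIndex b r p.2 q₂.2)
  exact Prod.ext (hc.injOn_blockIndex p.1 hu₁ hu₂ hblock) (injOn_slotIndex (hb p.2) hx₁ hx₂ hslot)

theorem isIntervalColoring_strongProdColoring [Nonempty B] (hc : IsIntervalColoring G t c)
    (ht : 1 ≤ t) (hb : ∀ x, BijOn (fun y => b s(x, y)) (H.neighborSet x) (Iio r)) :
    IsIntervalColoring (strongProd G H) (t * (r + 1) + r) (strongProdColoring G c b r) := by
  rw [mul_comm t]
  refine isIntervalColoring_iff.2 ⟨?_, ?_, fun p => hc.injOn_strongProdColoring hb p, ?_⟩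
  · rintro ⟨p, q⟩ hpq
    obtain ⟨a, -, -, ha⟩ := hc.palette_strongProdColoring hb p.1 p.2
    have hmem : strongProdColoring G c b r s(p, q) ∈
        Icc ((r + 1) * a + 1) ((r + 1) * sSup (palette G c p.1) + r) := by
      rw [← ha]
      exact ⟨q, hpq, rfl⟩
    have := Nat.mul_le_mul_left (r + 1) (hc.sSup_palette_le p.1)
    exact ⟨by grind, by grind⟩
  · intro i hi
    obtain ⟨q, hq, hq₁, hq₂⟩ := exists_block_of_mem_Icc ht hi
    obtain ⟨e, he, hek⟩ := hc.2.1 (q + 1) (by omega) hq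
    induction e using Sym2.ind with
    | _ u v =>
      obtain ⟨x⟩ := ‹Nonempty B›
      obtain ⟨a, -, hu, hux⟩ := hc.palette_strongProdColoring hb u x
      have hqu : q + 1 ∈ Ioc a (sSup (palette G c u)) := hu ▸ ⟨v, he, hek⟩
      have h₁ : (r + 1) * a ≤ (r + 1) * q := Nat.mul_le_mul_left _ (by grind)
      have h₂ := Nat.mul_le_mul_left (r + 1) hqu.2
      obtain ⟨w, hw, rfl⟩ : i ∈ palette (strongProd G H) (strongProdColoring G c b r) (u, x) :=
        hux ▸ ⟨by omega, by omega⟩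
      exact ⟨_, hw, rfl⟩
  · intro p
    obtain ⟨a, -, -, ha⟩ := hc.palette_strongProdColoring hb p.1 p.2
    rw [ha]
    exact ordConnected_Icc

end StrongProduct

/-- If `G, H ∈ 𝔑` and `H` is `r`-regular, then `G ⊠ H ∈ 𝔑`; moreover
`w(G ⊠ H) ≤ w(G)·(r+1) + r` and `W(G ⊠ H) ≥ W(G)·(r+1) + r`. -/
theorem strongProd_interval_colorable {α β : Type*} [Fintype α] [Fintype β]
    (G : SimpleGraph α) (H : SimpleGraph β) (r : ℕ)
    (hG : IntervalColorable G) (hH : IntervalColorable H)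
    (hreg : IsRegularGraph H r) :
    IntervalColorable (strongProd G H) ∧
    wNum (strongProd G H) ≤ wNum G * (r + 1) + r ∧
    WNum (strongProd G H) ≥ WNum G * (r + 1) + r := by
  obtain ⟨u, v, huv⟩ := hG.exists_adj
  obtain ⟨x, -, -⟩ := hH.exists_adj
  have : Nonempty β := ⟨x⟩
  obtain ⟨_, -, cH, hcH⟩ := hH
  obtain ⟨b, hb⟩ := hcH.exists_bijOn_of_isRegularGraph hreg
  have hprod (t : ℕ) (h : HasIntervalColoring G t) :
      HasIntervalColoring (strongProd G H) (t * (r + 1) + r) :=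
    let ⟨c, hc⟩ := h
    ⟨_, isIntervalColoring_strongProdColoring hc (hc.one_le huv) hb⟩
  obtain ⟨t, ht, hGt⟩ := hG
  have hne : {t | HasIntervalColoring G t}.Nonempty := ⟨t, hGt⟩
  exact ⟨⟨_, by nlinarith, hprod t hGt⟩, Nat.sInf_le (hprod _ (Nat.sInf_mem hne)),
    le_csSup (bddAbove_setOf_hasIntervalColoring _)
      (hprod _ (Nat.sSup_mem hne (bddAbove_setOf_hasIntervalColoring G)))⟩
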